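/- Let u ∈ L²_a(μ,H), U = I_W + u, and let L = dUμ/dμ be the Radon–Nikodym density of the image measure Uμ with respect to μ. Then L∘U · E_μ[ρ(-δu) | σ(U)] ≤ 1 holds μ-almost surely, where ρ(-δu) = exp(−∫₀¹ u̇_s·dW_s − ½∫₀¹|u̇_s|² ds) is the Girsanov exponential and E_μ[·|σ(U)] is the conditional expectation given the σ-field generated by U. -/

import Mathlib

/-! Put `ν := U_*(ρ(-δu) μ)`. Girsanov's inequality applied to indicators says `ν ≤ μ`, and since
`ρ(-δu) > 0` also `Uμ ≪ ν ≪ μ`. The conditional expectation of a density given `σ(U)` is the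
density of the pushforwards read through `U`, so `E_μ[ρ(-δu) | σ(U)] = (dν/dUμ) ∘ U`. By the chain
rule `(dν/dUμ) · (dUμ/dμ) = dν/dμ ≤ 1` holds μ-a.e., hence `Uμ`-a.e., which is the claim after
composing with `U`. -/

open MeasureTheory ProbabilityTheory Real

noncomputable section

/-- `ℝ^d` with the Euclidean structure. -/
abbrev Vec (d : ℕ) := EuclideanSpace ℝ (Fin d)

/-- Path space: the classical Wiener space `W = C₀([0,1],ℝ^d)` is modelled as functions
`ℝ → ℝ^d`; only the restriction to `[0,1]` is relevant. -/
abbrev Traj (d : ℕ) := ℝ → Vec d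

/-- Canonical filtration `ℬ_s` of the coordinate process on path space. -/
def canFilt (d : ℕ) (s : ℝ) : MeasurableSpace (Traj d) :=
  MeasurableSpace.comap (fun w (t : Set.Iic s) => w t) inferInstance

/-- Filtration generated by a path-valued map (e.g. the filtration `(𝒰_t)` of `U`). -/
def filtOf {Ω : Type*} (d : ℕ) (X : Ω → Traj d) (s : ℝ) : MeasurableSpace Ω :=
  MeasurableSpace.comap (fun ω (t : Set.Iic s) => X ω t) inferInstance

/-- Relative entropy `H(ν|μ) = ∫ (dν/dμ) log (dν/dμ) dμ`. -/
def relEnt {α : Type*} [MeasurableSpace α] (ν μ : Measure α) : ℝ :=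
  ∫ x, (ν.rnDeriv μ x).toReal * Real.log ((ν.rnDeriv μ x).toReal) ∂μ

/-- `μ` is the Wiener measure on path space: the coordinate process starts at `0`, has
centred Gaussian increments (characterised through one-dimensional projections) and has
increments independent of the past. -/
def IsWienerMeasure (d : ℕ) (μ : Measure (Traj d)) : Prop :=
  IsProbabilityMeasure μ ∧
  (∀ᵐ w ∂μ, w 0 = 0) ∧
  (∀ s t : ℝ, 0 ≤ s → s ≤ t → t ≤ 1 → ∀ L : Vec d →L[ℝ] ℝ, ‖L‖ = 1 →
    μ.map (fun w => L (w t - w s)) = gaussianReal 0 (Real.toNNReal (t - s))) ∧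
  (∀ s t : ℝ, 0 ≤ s → s ≤ t → t ≤ 1 →
    Indep (MeasurableSpace.comap (fun w => w t - w s) inferInstance) (canFilt d s) μ)

/-- The drift `s ↦ f s` is adapted to the canonical filtration for a.e. `s ∈ [0,1]`. -/
def AdaptedAE (d : ℕ) (f : ℝ → Traj d → Vec d) : Prop :=
  ∀ᵐ s ∂(volume.restrict (Set.Icc (0:ℝ) 1)), Measurable[canFilt d s] (f s)

/-- Kinetic energy `|u|_H² = ∫₀¹ |u̇_s|² ds`. -/
def energy {α : Type*} (d : ℕ) (f : ℝ → α → Vec d) (x : α) : ℝ :=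
  ∫ s in (0:ℝ)..1, ‖f s x‖^2

/-- Finiteness of the energy `∫₀¹|u̇_s|² ds < ∞`, stated via the lower integral. -/
def FiniteEnergy {α : Type*} (d : ℕ) (f : ℝ → α → Vec d) (x : α) : Prop :=
  ∫⁻ s in Set.Ioc (0:ℝ) 1, ENNReal.ofReal (‖f s x‖^2) < ⊤

/-- Square integrability of the drift: `E[∫₀¹|u̇_s|² ds] < ∞`. -/
def FiniteTotalEnergy {α : Type*} [MeasurableSpace α] (d : ℕ) (f : ℝ → α → Vec d)
    (μ : Measure α) : Prop :=
  ∫⁻ x, ∫⁻ s in Set.Ioc (0:ℝ) 1, ENNReal.ofReal (‖f s x‖^2) ∂volume ∂μ < ⊤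

/-- Girsanov exponential `ρ(-δu) = exp(-δu - ½|u|_H²)`, where `δ` is (a version of) the
Itô integral `∫₀¹ u̇_s·dW_s` and `en` the energy `|u|_H²`. -/
def gExp {α : Type*} (δ en : α → ℝ) (x : α) : ℝ :=
  Real.exp (-(δ x) - (1/2) * en x)

/-- The adapted perturbation of identity `U = I_W + u`, `U(w)(t) = w(t) + ∫₀^t u̇_s(w) ds`. -/
def apiMap (d : ℕ) (f : ℝ → Traj d → Vec d) : Traj d → Traj d :=
  fun w t => w t + ∫ s in (0:ℝ)..t, f s w

/-- `U = B + u` on a general probability space: `U_t(ω) = B_t(ω) + ∫₀^t u̇_s(ω) ds`. -/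
def genApi {Ω : Type*} (d : ℕ) (B : Ω → Traj d) (f : ℝ → Ω → Vec d) : Ω → Traj d :=
  fun ω t => B ω t + ∫ s in (0:ℝ)..t, f s ω

/-- `B` is an `(ℱ_t)`-Brownian motion on `(Ω,ℱ,(ℱ_t),P)` (time horizon `[0,1]`). -/
def IsBrownian {Ω : Type*} [m0 : MeasurableSpace Ω] (d : ℕ) (P : Measure Ω)
    (F : Filtration ℝ m0) (B : Ω → Traj d) : Prop :=
  Measurable B ∧ IsWienerMeasure d (P.map B) ∧
  (∀ t : ℝ, Measurable[F t] fun ω => B ω t) ∧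
  (∀ s t : ℝ, 0 ≤ s → s ≤ t → t ≤ 1 →
    Indep (MeasurableSpace.comap (fun ω => B ω t - B ω s) inferInstance) (F s) P)

/-- Drift adapted (for a.e. `s ∈ [0,1]`) to a filtration `F` on a general space. -/
def AdaptedAEF {Ω : Type*} [m0 : MeasurableSpace Ω] (d : ℕ) (F : Filtration ℝ m0)
    (f : ℝ → Ω → Vec d) : Prop :=
  ∀ᵐ s ∂(volume.restrict (Set.Icc (0:ℝ) 1)), Measurable[F s] (f s)

/-- Two σ-fields agree up to `P`-negligible sets. -/
def aeEqSigma {Ω : Type*} [MeasurableSpace Ω] (P : Measure Ω)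
    (m₁ m₂ : MeasurableSpace Ω) : Prop :=
  (∀ A, MeasurableSet[m₁] A → ∃ B, MeasurableSet[m₂] B ∧ P (symmDiff A B) = 0) ∧
  (∀ A, MeasurableSet[m₂] A → ∃ B, MeasurableSet[m₁] B ∧ P (symmDiff A B) = 0)

section

variable {α β : Type*} [MeasurableSpace α] [MeasurableSpace β]

lemma stronglyMeasurable_intervalIntegral_of_uncurry {E : Type*} [NormedAddCommGroup E]
    [NormedSpace ℝ E] {f : ℝ → α → E} (hf : StronglyMeasurable (Function.uncurry f)) (a b : ℝ) :
    StronglyMeasurable fun x => ∫ s in a..b, f s x := by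
  have hsm : StronglyMeasurable fun p : α × ℝ => f p.2 p.1 := hf.comp_measurable measurable_swap
  exact hsm.integral_prod_right'.sub hsm.integral_prod_right'

lemma map_withDensity_ofReal_le_of_integral_comp_mul_le {g : α → β} (hg : Measurable g)
    {μ : Measure α} {ν : Measure β} [IsFiniteMeasure ν] {ρ : α → ℝ} (hρ : Integrable ρ μ)
    (hρ_nonneg : 0 ≤ᵐ[μ] ρ)
    (h : ∀ (f : β → ℝ) (c : ℝ), Measurable f → (∀ y, 0 ≤ f y) → (∀ y, f y ≤ c) →
      ∫ x, f (g x) * ρ x ∂μ ≤ ∫ y, f y ∂ν) :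
    (μ.withDensity fun x => ENNReal.ofReal (ρ x)).map g ≤ ν := by
  refine Measure.le_iff.2 fun s hs => ?_
  have hind := h (s.indicator 1) 1 (measurable_const.indicator hs)
    (Set.indicator_nonneg fun _ _ => zero_le_one) (Set.indicator_le_self' fun _ _ => zero_le_one)
  have hpt : ∀ x, s.indicator 1 (g x) * ρ x = (g ⁻¹' s).indicator ρ x := fun x => by
    by_cases hx : g x ∈ s <;> simp [hx]
  simp only [hpt] at hind
  rw [integral_indicator (hg hs), integral_indicator_one hs] at hind
  rw [Measure.map_apply hg hs, withDensity_apply _ (hg hs),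
    ← ofReal_integral_eq_lintegral_ofReal hρ.integrableOn (ae_restrict_of_ae hρ_nonneg),
    ← ofReal_measureReal (measure_ne_top ν s)]
  exact ENNReal.ofReal_le_ofReal hind

lemma condExp_comap_ae_eq_toReal_rnDeriv_map {g : α → β} (hg : Measurable g)
    {μ : Measure α} [IsFiniteMeasure μ] {ρ : α → ℝ} (hρ : Integrable ρ μ)
    (hρ_nonneg : 0 ≤ᵐ[μ] ρ) :
    μ[ρ | MeasurableSpace.comap g inferInstance] =ᵐ[μ] fun x =>
      (((μ.withDensity fun x => ENNReal.ofReal (ρ x)).map g).rnDeriv (μ.map g) (g x)).toReal := by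
  have : IsFiniteMeasure (μ.withDensity fun x => ENNReal.ofReal (ρ x)) :=
    isFiniteMeasure_withDensity_ofReal hρ.hasFiniteIntegral
  have hρ_eq : (fun x => ((μ.withDensity fun x => ENNReal.ofReal (ρ x)).rnDeriv μ x).toReal)
      =ᵐ[μ] ρ := by
    filter_upwards [Measure.rnDeriv_withDensity₀ μ hρ.aemeasurable.ennreal_ofReal, hρ_nonneg]
      with x hx hx_nonneg
    rw [hx, ENNReal.toReal_ofReal hx_nonneg]
  exact (condExp_congr_ae hρ_eq.symm).trans
    (toReal_rnDeriv_map (withDensity_absolutelyContinuous _ _) hg).symm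

theorem toReal_rnDeriv_map_comp_mul_condExp_le_one {g : α → β} (hg : Measurable g)
    {μ : Measure α} [IsFiniteMeasure μ] {ν : Measure β} [SigmaFinite ν] {ρ : α → ℝ}
    (hρ : Integrable ρ μ) (hρ_pos : ∀ᵐ x ∂μ, 0 < ρ x)
    (hle : (μ.withDensity fun x => ENNReal.ofReal (ρ x)).map g ≤ ν) :
    ∀ᵐ x ∂μ, ((μ.map g).rnDeriv ν (g x)).toReal *
      μ[ρ | MeasurableSpace.comap g inferInstance] x ≤ 1 := by
  set Q := μ.withDensity fun x => ENNReal.ofReal (ρ x)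
  have : IsFiniteMeasure Q := isFiniteMeasure_withDensity_ofReal hρ.hasFiniteIntegral
  have hμQ : μ ≪ Q := withDensity_absolutelyContinuous' hρ.aemeasurable.ennreal_ofReal
    (hρ_pos.mono fun x hx => (ENNReal.ofReal_pos.2 hx).ne')
  have hQμ : Q.map g ≪ μ.map g := (withDensity_absolutelyContinuous _ _).map hg
  have hmap_ac : μ.map g ≪ ν := (hμQ.map hg).trans (Measure.absolutelyContinuous_of_le hle)
  have hchain : ∀ᵐ y ∂ν, (Q.map g).rnDeriv (μ.map g) y * (μ.map g).rnDeriv ν y ≤ 1 := by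
    filter_upwards [Measure.rnDeriv_mul_rnDeriv hQμ, Measure.rnDeriv_le_one_of_le hle]
      with y hmul hle_one
    exact hmul.trans_le hle_one
  filter_upwards [ae_of_ae_map hg.aemeasurable (hmap_ac.ae_le hchain),
    condExp_comap_ae_eq_toReal_rnDeriv_map hg hρ (hρ_pos.mono fun x hx => hx.le)]
    with x hx hcond
  rw [hcond, ← ENNReal.toReal_mul, mul_comm]
  exact ENNReal.toReal_le_of_le_ofReal zero_le_one (by simpa using hx)

end

lemma measurable_apiMap {d : ℕ} {udot : ℝ → Traj d → Vec d}
    (humeas : Measurable (Function.uncurry udot)) : Measurable (apiMap d udot) :=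
  measurable_pi_iff.2 fun t => (measurable_pi_apply t).add
    (stronglyMeasurable_intervalIntegral_of_uncurry humeas.stronglyMeasurable 0 t).measurable

theorem density_times_conditional_girsanov_le_one_general
    (d : ℕ) (μ : Measure (Traj d)) (hμ : IsWienerMeasure d μ)
    (udot : ℝ → Traj d → Vec d)
    (humeas : Measurable (Function.uncurry udot))
    -- `δu` is (a version of) the Itô integral `∫₀¹ u̇_s · dW_s`
    (δu : Traj d → ℝ)
    -- Girsanov's theorem for the exponential `ρ(-δu) = exp(-δu - ½|u|_H²)`
    (hGirsanov : ∀ (f : Traj d → ℝ) (c : ℝ), Measurable f → (∀ w, 0 ≤ f w) →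
      (∀ w, f w ≤ c) →
      ∫ w, f (apiMap d udot w) * gExp δu (energy d udot) w ∂μ ≤ ∫ w, f w ∂μ) :
    ∀ᵐ w ∂μ,
      ((μ.map (apiMap d udot)).rnDeriv μ (apiMap d udot w)).toReal *
        (μ[gExp δu (energy d udot) |
            MeasurableSpace.comap (apiMap d udot) inferInstance]) w ≤ 1 := by
  have : IsProbabilityMeasure μ := hμ.1
  have hU := measurable_apiMap humeas
  by_cases hρ : Integrable (gExp δu (energy d udot)) μ
  swap
  · simp [condExp_of_not_integrable hρ]
  have hρ_pos : ∀ w, 0 < gExp δu (energy d udot) w := fun w => Real.exp_pos _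
  exact toReal_rnDeriv_map_comp_mul_condExp_le_one hU hρ (.of_forall hρ_pos)
    (map_withDensity_ofReal_le_of_integral_comp_mul_le hU hρ (.of_forall fun w => (hρ_pos w).le)
      hGirsanov)

/-- With `L = dUμ/dμ` and `ρ(-δu)` the Girsanov exponential (the Itô
integral `δu = ∫₀¹ u̇_s·dW_s` being given, characterised by the Girsanov inequality
`E_μ[f∘U·ρ(-δu)] ≤ E_μ[f]` for bounded nonnegative measurable `f`), one has
`L∘U · E_μ[ρ(-δu) | σ(U)] ≤ 1` μ-a.s. -/
theorem density_times_conditional_girsanov_le_one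
    (d : ℕ) (μ : Measure (Traj d)) (hμ : IsWienerMeasure d μ)
    (udot : ℝ → Traj d → Vec d)
    (humeas : Measurable (Function.uncurry udot))
    (huadapted : AdaptedAE d udot)
    (huL2 : FiniteTotalEnergy d udot μ)
    -- `δu` is (a version of) the Itô integral `∫₀¹ u̇_s · dW_s`
    (δu : Traj d → ℝ) (hδu : Measurable δu)
    -- Girsanov's theorem for the exponential `ρ(-δu) = exp(-δu - ½|u|_H²)`
    (hGirsanov : ∀ (f : Traj d → ℝ) (c : ℝ), Measurable f → (∀ w, 0 ≤ f w) →
      (∀ w, f w ≤ c) →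
      ∫ w, f (apiMap d udot w) * gExp δu (energy d udot) w ∂μ ≤ ∫ w, f w ∂μ) :
    ∀ᵐ w ∂μ,
      ((μ.map (apiMap d udot)).rnDeriv μ (apiMap d udot w)).toReal *
        (μ[gExp δu (energy d udot) |
            MeasurableSpace.comap (apiMap d udot) inferInstance]) w ≤ 1 :=
  density_times_conditional_girsanov_le_one_general d μ hμ udot humeas δu hGirsanov

end
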